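/- arXiv:1306.5705 — 2 statements merged into one kernel-verified Lean document; each statement's English description precedes it below -/
import Mathlib

section
/- (Rockafellar–Uryasev) For any real random variable X with E[X] < ∞ and continuous distribution, the function F_p(X, η) := η + (1/(1−p)) E[(X − η)_+] is convex in η, CVaR^p(X) := E[X | X ≥ VaR^p(X)] equals min_{η ∈ ℝ} F_p(X, η), the set of minimizers is nonempty, closed and bounded, VaR^p(X) is a minimizer, and CVaR^p(X) = F_p(X, VaR^p(X)). -/
/-!
`η ↦ E[(X - η)₊]` is convex, as an average of the convex functions `η ↦ (x - η)₊`, and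
`P(X ≥ v)` is a subgradient of it at `v`, because `(x - η)₊ ≥ (x - v)₊ + (v - η) 1[x ≥ v]`.
When `P(X ≥ v) = 1 - p` the subgradient of `F_p` at `v` is therefore `0`, so `v` minimizes
`F_p`, and `F_p(v) = v + E[(X - v) 1[X ≥ v]] / (1 - p) = E[X 1[X ≥ v]] / (1 - p)`.
The minimizers form a closed set because the convex function `F_p` is continuous, and a bounded
one because `F_p(η) ≥ η` and `F_p(η) ≥ η + (E X - η) / (1 - p)`.
-/

open MeasureTheory

theorem convexOn_integral {Ω E : Type*} [MeasurableSpace Ω] [AddCommMonoid E] [Module ℝ E]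
    {μ : Measure Ω} {s : Set E} {f : E → Ω → ℝ} (hs : Convex ℝ s)
    (hf : ∀ ω, ConvexOn ℝ s (f · ω)) (hint : ∀ x ∈ s, Integrable (f x) μ) :
    ConvexOn ℝ s (fun x => ∫ ω, f x ω ∂μ) := by
  refine ⟨hs, fun x hx y hy a b ha hb hab => ?_⟩
  have hxy : a • x + b • y ∈ s := hs hx hy ha hb hab
  simp only [smul_eq_mul]
  rw [← integral_const_mul, ← integral_const_mul,
    ← integral_add ((hint x hx).const_mul a) ((hint y hy).const_mul b)]
  exact integral_mono (hint _ hxy) (((hint x hx).const_mul a).add ((hint y hy).const_mul b))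
    fun ω => (hf ω).2 hx hy ha hb hab

section StopLoss

variable {Ω : Type*} [MeasurableSpace Ω] {μ : Measure Ω} {X : Ω → ℝ}

theorem convexOn_posPart_sub (x : ℝ) : ConvexOn ℝ Set.univ (fun η : ℝ => max (x - η) 0) :=
  ((convexOn_const x convex_univ).sub (concaveOn_id convex_univ)).sup
    (convexOn_const 0 convex_univ)

theorem MeasureTheory.Integrable.posPart_sub_const [IsFiniteMeasure μ] (hX : Integrable X μ)
    (η : ℝ) :
    Integrable (fun ω => max (X ω - η) 0) μ :=
  (hX.sub (integrable_const η)).pos_part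

theorem convexOn_integral_posPart_sub [IsFiniteMeasure μ] (hX : Integrable X μ) :
    ConvexOn ℝ Set.univ (fun η => ∫ ω, max (X ω - η) 0 ∂μ) :=
  convexOn_integral convex_univ (fun ω => convexOn_posPart_sub (X ω))
    fun η _ => hX.posPart_sub_const η

theorem integral_posPart_sub_add_le [IsFiniteMeasure μ] (hX : Integrable X μ)
    {v : ℝ} (hv : MeasurableSet {ω | v ≤ X ω}) (η : ℝ) :
    ∫ ω, max (X ω - v) 0 ∂μ + (v - η) * μ.real {ω | v ≤ X ω} ≤ ∫ ω, max (X ω - η) 0 ∂μ := by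
  have hind : Integrable ({ω | v ≤ X ω}.indicator fun _ => v - η) μ :=
    (integrable_const _).indicator hv
  rw [mul_comm, ← smul_eq_mul, ← integral_indicator_const _ hv,
    ← integral_add (hX.posPart_sub_const v) hind]
  refine integral_mono ((hX.posPart_sub_const v).add hind) (hX.posPart_sub_const η) fun ω => ?_
  by_cases h : v ≤ X ω
  · simp only [Set.indicator_of_mem (show ω ∈ {ω | v ≤ X ω} from h),
      max_eq_left (sub_nonneg.mpr h)]
    exact le_max_of_le_left (by linarith)
  · simp only [Set.indicator_of_notMem (show ω ∉ {ω | v ≤ X ω} from h), add_zero,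
      max_eq_right (sub_nonpos.mpr (not_le.mp h).le)]
    exact le_max_right _ _

theorem integral_posPart_sub_eq [IsFiniteMeasure μ] (hX : Integrable X μ)
    {v : ℝ} (hv : MeasurableSet {ω | v ≤ X ω}) :
    ∫ ω, max (X ω - v) 0 ∂μ = ∫ ω in {ω | v ≤ X ω}, X ω ∂μ - v * μ.real {ω | v ≤ X ω} := by
  have : (fun ω => max (X ω - v) 0) = {ω | v ≤ X ω}.indicator fun ω => X ω - v := by
    funext ω
    by_cases h : v ≤ X ω
    · simp [h]
    · simp [h, (not_le.mp h).le]
  rw [this, integral_indicator hv, integral_sub hX.integrableOn (integrableOn_const (by simp)),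
    setIntegral_const, smul_eq_mul, mul_comm]

theorem integral_sub_le_integral_posPart_sub [IsProbabilityMeasure μ] (hX : Integrable X μ)
    (η : ℝ) : ∫ ω, X ω ∂μ - η ≤ ∫ ω, max (X ω - η) 0 ∂μ := by
  have hmean : ∫ ω, (X ω - η) ∂μ = ∫ ω, X ω ∂μ - η := by
    simp [integral_sub hX (integrable_const η)]
  rw [← hmean]
  exact integral_mono (hX.sub (integrable_const η)) (hX.posPart_sub_const η)
    fun ω => le_max_left _ _

end StopLoss

section CVaR

variable {Ω : Type*} [MeasurableSpace Ω] {μ : Measure Ω} {X : Ω → ℝ} {p : ℝ}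

/-- The function `F_p(X, η)` of Rockafellar and Uryasev. -/
noncomputable def cvarObjective (μ : Measure Ω) (X : Ω → ℝ) (p η : ℝ) : ℝ :=
  η + (1 / (1 - p)) * ∫ ω, max (X ω - η) 0 ∂μ

theorem convexOn_cvarObjective [IsFiniteMeasure μ] (hX : Integrable X μ) (hp : p < 1) :
    ConvexOn ℝ Set.univ (cvarObjective μ X p) :=
  (convexOn_id convex_univ).add
    ((convexOn_integral_posPart_sub hX).smul (one_div_pos.mpr (sub_pos.mpr hp)).le)

theorem continuous_cvarObjective [IsFiniteMeasure μ] (hX : Integrable X μ) (hp : p < 1) :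
    Continuous (cvarObjective μ X p) :=
  continuousOn_univ.mp ((convexOn_cvarObjective hX hp).continuousOn isOpen_univ)

theorem cvarObjective_le_of_measureReal_eq [IsFiniteMeasure μ] (hX : Integrable X μ) {v : ℝ}
    (hv : MeasurableSet {ω | v ≤ X ω}) (hmass : μ.real {ω | v ≤ X ω} = 1 - p) (hp : p < 1)
    (η : ℝ) : cvarObjective μ X p v ≤ cvarObjective μ X p η := by
  have hsub := integral_posPart_sub_add_le hX hv η
  rw [hmass] at hsub
  have h1p : 0 < 1 - p := sub_pos.mpr hp
  have hscaled := mul_le_mul_of_nonneg_left hsub (one_div_pos.mpr h1p).le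
  rw [mul_add, mul_comm (v - η), ← mul_assoc, one_div_mul_cancel h1p.ne', one_mul] at hscaled
  unfold cvarObjective
  linarith

theorem cvarObjective_eq_setIntegral_div [IsFiniteMeasure μ] (hX : Integrable X μ) {v : ℝ}
    (hv : MeasurableSet {ω | v ≤ X ω}) (hmass : μ.real {ω | v ≤ X ω} = 1 - p) (hp : p < 1) :
    cvarObjective μ X p v = (∫ ω in {ω | v ≤ X ω}, X ω ∂μ) / (1 - p) := by
  have : 1 - p ≠ 0 := (sub_pos.mpr hp).ne'
  rw [cvarObjective, integral_posPart_sub_eq hX hv, hmass]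
  field_simp
  ring

theorem isBounded_setOf_cvarObjective_le [IsProbabilityMeasure μ] (hX : Integrable X μ)
    (hp : p ∈ Set.Ioo 0 1) (c : ℝ) :
    Bornology.IsBounded {η | cvarObjective μ X p η ≤ c} := by
  refine (Metric.isBounded_Icc ((∫ ω, X ω ∂μ - (1 - p) * c) / p) c).subset fun η hη => ?_
  have h1p : 0 < 1 - p := sub_pos.mpr hp.2
  have hη' : (1 - p) * η + ∫ ω, max (X ω - η) 0 ∂μ ≤ (1 - p) * c := by
    have := mul_le_mul_of_nonneg_left hη.out h1p.le
    rwa [cvarObjective, mul_add, ← mul_assoc, mul_one_div_cancel h1p.ne', one_mul] at this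
  have hpos : 0 ≤ ∫ ω, max (X ω - η) 0 ∂μ := integral_nonneg fun ω => le_max_right _ _
  have hmean := integral_sub_le_integral_posPart_sub hX η
  constructor
  · rw [div_le_iff₀ hp.1]
    linarith
  · exact le_of_mul_le_mul_left (by linarith) h1p

end CVaR

theorem rockafellar_uryasev_general
    {Ω : Type*} [MeasurableSpace Ω] (P : Measure Ω) [IsProbabilityMeasure P]
    (X : Ω → ℝ) (hX : Measurable X) (hint : Integrable X P)
    (p : ℝ) (hp : p ∈ Set.Ioo (0 : ℝ) 1)
    (F : ℝ → ℝ)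
    (hF : ∀ η : ℝ, F η = η + (1 / (1 - p)) * ∫ ω, max (X ω - η) 0 ∂P)
    (v : ℝ)
    (hmass : P {ω | v ≤ X ω} = ENNReal.ofReal (1 - p))
    (cvar : ℝ)
    (hcvar : cvar = (∫ ω in {ω | v ≤ X ω}, X ω ∂P) / (1 - p)) :
    ConvexOn ℝ Set.univ F ∧
    (∀ η : ℝ, F v ≤ F η) ∧
    cvar = F v ∧
    {η : ℝ | ∀ η' : ℝ, F η ≤ F η'}.Nonempty ∧
    IsClosed {η : ℝ | ∀ η' : ℝ, F η ≤ F η'} ∧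
    Bornology.IsBounded {η : ℝ | ∀ η' : ℝ, F η ≤ F η'} := by
  obtain rfl : F = cvarObjective P X p := funext hF
  have hv : MeasurableSet {ω | v ≤ X ω} := measurableSet_le measurable_const hX
  have hmass' : P.real {ω | v ≤ X ω} = 1 - p := by
    rw [measureReal_def, hmass, ENNReal.toReal_ofReal (sub_pos.mpr hp.2).le]
  have hmin := cvarObjective_le_of_measureReal_eq hint hv hmass' hp.2
  refine ⟨convexOn_cvarObjective hint hp.2, hmin,
    hcvar.trans (cvarObjective_eq_setIntegral_div hint hv hmass' hp.2).symm, ⟨v, hmin⟩, ?_,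
    (isBounded_setOf_cvarObjective_le hint hp _).subset fun η hη => hη v⟩
  rw [Set.ofPred_forall]
  exact isClosed_iInter fun η' => isClosed_le (continuous_cvarObjective hint hp.2) continuous_const

/-- (Rockafellar–Uryasev) For an integrable random variable `X` with continuous distribution
(`P(X ≥ VaR^p(X)) = 1 - p`), the function `F_p(X, η) = η + (1/(1-p)) E[(X - η)₊]` is convex,
`CVaR^p(X) := E[X | X ≥ VaR^p(X)]` equals `min_η F_p(X, η)`, the set of minimizers is nonempty,
closed and bounded, `VaR^p(X)` is a minimizer, and `CVaR^p(X) = F_p(X, VaR^p(X))`. -/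
theorem rockafellar_uryasev
    {Ω : Type*} [MeasurableSpace Ω] (P : Measure Ω) [IsProbabilityMeasure P]
    (X : Ω → ℝ) (hX : Measurable X) (hint : Integrable X P)
    (p : ℝ) (hp : p ∈ Set.Ioo (0 : ℝ) 1)
    (F : ℝ → ℝ)
    (hF : ∀ η : ℝ, F η = η + (1 / (1 - p)) * ∫ ω, max (X ω - η) 0 ∂P)
    (v : ℝ) (hv : v = sInf {η : ℝ | P {ω | X ω ≤ η} ≥ ENNReal.ofReal p})
    (hmass : P {ω | v ≤ X ω} = ENNReal.ofReal (1 - p))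
    (cvar : ℝ)
    (hcvar : cvar = (∫ ω in {ω | v ≤ X ω}, X ω ∂P) / (1 - p)) :
    ConvexOn ℝ Set.univ F ∧
    (∀ η : ℝ, F v ≤ F η) ∧
    cvar = F v ∧
    {η : ℝ | ∀ η' : ℝ, F η ≤ F η'}.Nonempty ∧
    IsClosed {η : ℝ | ∀ η' : ℝ, F η ≤ F η'} ∧
    Bornology.IsBounded {η : ℝ | ∀ η' : ℝ, F η ≤ F η'} :=
  rockafellar_uryasev_general P X hX hint p hp F hF v hmass cvar hcvar
end

section
/- If X has a density and is integrable, then η ↦ F_p(X, η) = η + (1/(1−p)) E[(X − η)_+] is continuously differentiable with derivative 1 − (1/(1−p)) P(X > η), and VaR^p(X) is a critical point (where P(X > η) = 1−p) hence a global minimizer. -/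
/-! The density makes the law of `X` atomless, so its distribution function `G` is continuous.
The integrand `max (X - η) 0` is `1`-Lipschitz in `η` with derivative `-1_{X > η}` off the null
set `{X = η}`, so differentiating under the integral gives `F' = 1 - (1 - G) / (1 - p)`, which is
continuous and monotone. Continuity of `G` forces `G (VaR^p X) = p`, so `F'` vanishes at `VaR^p X`,
and a differentiable function with monotone derivative is minimized at any critical point. -/

open MeasureTheory ProbabilityTheory Set Filter Topology

theorem Continuous.apply_csInf_setOf_le_eq {G : ℝ → ℝ} (hG : Continuous G) {a b p : ℝ}
    (hbot : Tendsto G atBot (𝓝 a)) (htop : Tendsto G atTop (𝓝 b)) (hap : a < p) (hpb : p < b) :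
    G (sInf {x | p ≤ G x}) = p := by
  set S := {x | p ≤ G x}
  obtain ⟨x₁, hx₁⟩ := (htop.eventually_const_lt hpb).exists
  obtain ⟨x₀, hx₀⟩ := eventually_atBot.1 (hbot.eventually_lt_const hap)
  have hbdd : BddBelow S := ⟨x₀, fun x hx => le_of_not_ge fun h => (hx₀ x h).not_ge hx⟩
  have hmem : sInf S ∈ S :=
    (isClosed_le continuous_const hG).csInf_mem ⟨x₁, hx₁.le⟩ hbdd
  refine le_antisymm (le_of_tendsto (hG.continuousAt.tendsto.mono_left
    (nhdsWithin_le_nhds (s := Iio (sInf S)))) ?_) hmem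
  exact eventually_nhdsWithin_of_forall fun x hx =>
    le_of_lt (not_le.1 fun h => (csInf_le hbdd h).not_gt hx)

theorem le_of_hasDerivAt_of_monotone_deriv {F F' : ℝ → ℝ} (hF : ∀ x, HasDerivAt F (F' x) x)
    (hF' : Monotone F') {v : ℝ} (hv : F' v = 0) (x : ℝ) : F v ≤ F x := by
  have hcont : Continuous F := continuous_iff_continuousAt.2 fun x => (hF x).continuousAt
  rcases le_total x v with hxv | hvx
  · refine antitoneOn_of_hasDerivWithinAt_nonpos (convex_Iic v) hcont.continuousOn
      (fun y _ => (hF y).hasDerivWithinAt) (fun y hy => ?_) hxv self_mem_Iic hxv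
    rw [interior_Iic] at hy
    exact hv ▸ hF' (le_of_lt hy)
  · refine monotoneOn_of_hasDerivWithinAt_nonneg (convex_Ici v) hcont.continuousOn
      (fun y _ => (hF y).hasDerivWithinAt) (fun y hy => ?_) self_mem_Ici hvx hvx
    rw [interior_Ici] at hy
    exact hv ▸ hF' (le_of_lt hy)

theorem hasDerivAt_max_sub_zero {x η : ℝ} (h : x ≠ η) :
    HasDerivAt (fun t => max (x - t) 0) ((Ioi η).indicator (fun _ => -1) x) η := by
  rcases h.lt_or_gt with h | h
  · rw [indicator_of_notMem (show x ∉ Ioi η from not_lt.2 h.le)]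
    refine (hasDerivAt_const η 0).congr_of_eventuallyEq ?_
    filter_upwards [Ioi_mem_nhds h] with t ht
    exact max_eq_right (sub_nonpos.2 (le_of_lt ht))
  · rw [indicator_of_mem (mem_Ioi.2 h)]
    refine ((hasDerivAt_id η).const_sub x).congr_of_eventuallyEq ?_
    filter_upwards [Iio_mem_nhds h] with t ht
    exact max_eq_left (sub_nonneg.2 (le_of_lt ht))

theorem ProbabilityTheory.continuous_cdf (μ : Measure ℝ) [IsProbabilityMeasure μ]
    [NullSingletonClass μ] : Continuous (cdf μ) := by
  refine continuous_iff_continuousAt.2 fun x => ?_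
  rw [(monotone_cdf μ).continuousAt_iff_leftLim_eq_rightLim, StieltjesFunction.rightLim_eq]
  have hjump := (cdf μ).measure_singleton x
  rw [measure_cdf, measure_singleton, eq_comm, ENNReal.ofReal_eq_zero, sub_nonpos] at hjump
  exact le_antisymm ((monotone_cdf μ).leftLim_le le_rfl) hjump

theorem ProbabilityTheory.cdf_csInf_setOf_le_cdf (μ : Measure ℝ) [IsProbabilityMeasure μ]
    [NullSingletonClass μ] {p : ℝ} (hp : p ∈ Ioo 0 1) :
    cdf μ (sInf {x | p ≤ cdf μ x}) = p :=
  (continuous_cdf μ).apply_csInf_setOf_le_eq (tendsto_cdf_atBot μ) (tendsto_cdf_atTop μ) hp.1 hp.2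

theorem ProbabilityTheory.measure_le_eq_ofReal_cdf_map {Ω : Type*} [MeasurableSpace Ω]
    {P : Measure Ω} [IsProbabilityMeasure P] {X : Ω → ℝ} (hX : Measurable X) (η : ℝ) :
    P {ω | X ω ≤ η} = ENNReal.ofReal (cdf (P.map X) η) := by
  have := Measure.isProbabilityMeasure_map (μ := P) hX.aemeasurable
  rw [ofReal_cdf, Measure.map_apply hX measurableSet_Iic]
  rfl

theorem ProbabilityTheory.measureReal_lt_eq_one_sub_cdf_map {Ω : Type*} [MeasurableSpace Ω]
    {P : Measure Ω} [IsProbabilityMeasure P] {X : Ω → ℝ} (hX : Measurable X) (η : ℝ) :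
    P.real {ω | η < X ω} = 1 - cdf (P.map X) η := by
  have := Measure.isProbabilityMeasure_map (μ := P) hX.aemeasurable
  rw [cdf_eq_real, map_measureReal_apply hX measurableSet_Iic, ← probReal_compl_eq_one_sub
    (hX measurableSet_Iic)]
  congr 1
  ext ω
  simp

theorem hasDerivAt_integral_max_sub_zero {Ω : Type*} [MeasurableSpace Ω] {μ : Measure Ω}
    [IsFiniteMeasure μ] {X : Ω → ℝ} (hX : Measurable X) (hint : Integrable X μ) {η : ℝ}
    (hη : ∀ᵐ ω ∂μ, X ω ≠ η) :
    HasDerivAt (fun t => ∫ ω, max (X ω - t) 0 ∂μ) (-μ.real {ω | η < X ω}) η := by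
  have hderiv := hasDerivAt_integral_of_dominated_loc_of_lip (μ := μ) (x₀ := η)
    (F := fun t ω => max (X ω - t) 0) (F' := fun ω => (Ioi η).indicator (fun _ => -1) (X ω))
    (bound := fun _ => 1) univ_mem
    (Eventually.of_forall fun t =>
      ((hX.sub measurable_const).max measurable_const).aestronglyMeasurable)
    (hint.sub (integrable_const η)).pos_part
    ((measurable_const.indicator measurableSet_Ioi).comp hX).aestronglyMeasurable
    (Eventually.of_forall fun ω => by
      simpa using (IsometryEquiv.subLeft (X ω)).isometry.lipschitz.max_const 0)
    (integrable_const 1)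
    (hη.mono fun ω => hasDerivAt_max_sub_zero)
  have hF'_integral :
      ∫ ω, (Ioi η).indicator (fun _ => (-1 : ℝ)) (X ω) ∂μ = -μ.real {ω | η < X ω} := by
    rw [← integral_map hX.aemeasurable, integral_indicator_const _ measurableSet_Ioi,
      map_measureReal_apply hX measurableSet_Ioi]
    · simp [preimage, smul_eq_mul]
    · exact aestronglyMeasurable_const.indicator measurableSet_Ioi
  simpa only [hF'_integral] using hderiv.2

theorem F_p_differentiable_var_minimizer_general
    {Ω : Type*} [MeasurableSpace Ω] (P : Measure Ω) [IsProbabilityMeasure P]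
    (X : Ω → ℝ) (hX : Measurable X) (hint : Integrable X P)
    (f : ℝ → ℝ)
    (hdens : Measure.map X P = MeasureTheory.volume.withDensity fun x => ENNReal.ofReal (f x))
    (p : ℝ) (hp : p ∈ Set.Ioo (0 : ℝ) 1)
    (F : ℝ → ℝ)
    (hF : ∀ η : ℝ, F η = η + (1 / (1 - p)) * ∫ ω, max (X ω - η) 0 ∂P)
    (v : ℝ) (hv : v = sInf {η : ℝ | P {ω | X ω ≤ η} ≥ ENNReal.ofReal p}) :
    (∀ η : ℝ, HasDerivAt F (1 - (1 / (1 - p)) * (P {ω | η < X ω}).toReal) η) ∧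
    (Continuous fun η : ℝ => 1 - (1 / (1 - p)) * (P {ω | η < X ω}).toReal) ∧
    (P {ω | v < X ω}).toReal = 1 - p ∧
    (∀ η : ℝ, F v ≤ F η) := by
  have := Measure.isProbabilityMeasure_map (μ := P) hX.aemeasurable
  have : NullSingletonClass (P.map X) := hdens ▸ inferInstance
  have hFderiv : ∀ η, HasDerivAt F (1 - (1 / (1 - p)) * P.real {ω | η < X ω}) η := fun η => by
    have hnoatom := ae_of_ae_map hX.aemeasurable ((P.map X).ae_ne η)
    rw [show F = _ from funext hF]
    exact ((hasDerivAt_id' η).add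
      ((hasDerivAt_integral_max_sub_zero hX hint hnoatom).const_mul (1 / (1 - p)))).congr_deriv
      (by ring)
  have hvar : cdf (P.map X) v = p := by
    have hset : {η | P {ω | X ω ≤ η} ≥ ENNReal.ofReal p} = {η | p ≤ cdf (P.map X) η} := by
      ext η
      change ENNReal.ofReal p ≤ _ ↔ p ≤ _
      rw [measure_le_eq_ofReal_cdf_map hX, ENNReal.ofReal_le_ofReal_iff (cdf_nonneg _ _)]
    rw [hv, hset, cdf_csInf_setOf_le_cdf _ hp]
  have hc : 0 < 1 / (1 - p) := one_div_pos.2 (sub_pos.2 hp.2)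
  simp only [← measureReal_def, measureReal_lt_eq_one_sub_cdf_map hX] at hFderiv ⊢
  refine ⟨hFderiv, ?_, by rw [hvar], le_of_hasDerivAt_of_monotone_deriv hFderiv ?_ ?_⟩
  · exact continuous_const.sub (continuous_const.mul (continuous_const.sub (continuous_cdf _)))
  · exact fun a b hab => sub_le_sub_left
      (mul_le_mul_of_nonneg_left (sub_le_sub_left (monotone_cdf _ hab) 1) hc.le) 1
  · rw [hvar, one_div_mul_cancel (sub_pos.2 hp.2).ne', sub_self]

/-- If `X` has a probability density and is integrable, then
`η ↦ F_p(X, η) = η + (1/(1-p)) E[(X - η)₊]` is continuously differentiable with derivative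
`1 - (1/(1-p)) P(X > η)`, and `VaR^p(X)` is a critical point (where `P(X > η) = 1 - p`),
hence a global minimizer. -/
theorem F_p_differentiable_var_minimizer
    {Ω : Type*} [MeasurableSpace Ω] (P : Measure Ω) [IsProbabilityMeasure P]
    (X : Ω → ℝ) (hX : Measurable X) (hint : Integrable X P)
    (f : ℝ → ℝ) (hf : Measurable f)
    (hdens : Measure.map X P = MeasureTheory.volume.withDensity fun x => ENNReal.ofReal (f x))
    (p : ℝ) (hp : p ∈ Set.Ioo (0 : ℝ) 1)
    (F : ℝ → ℝ)
    (hF : ∀ η : ℝ, F η = η + (1 / (1 - p)) * ∫ ω, max (X ω - η) 0 ∂P)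
    (v : ℝ) (hv : v = sInf {η : ℝ | P {ω | X ω ≤ η} ≥ ENNReal.ofReal p}) :
    (∀ η : ℝ, HasDerivAt F (1 - (1 / (1 - p)) * (P {ω | η < X ω}).toReal) η) ∧
    (Continuous fun η : ℝ => 1 - (1 / (1 - p)) * (P {ω | η < X ω}).toReal) ∧
    (P {ω | v < X ω}).toReal = 1 - p ∧
    (∀ η : ℝ, F v ≤ F η) :=
  F_p_differentiable_var_minimizer_general P X hX hint f hdens p hp F hF v hv
end
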